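/- Assume d is not a square in F. For every integer r ≥ 0 and every u ∈ o, the double cosets T(F)·diag(ϖ^r, 1)·w·I and T(F)·diag(ϖ^r, 1)·[[1, 0], [u, 1]]·I in GL₂(F) are equal if and only if a·ϖ^{2r} + b·ϖ^r·u + c·u² ∈ o^×. -/

import Mathlib

open scoped Pointwise
open Matrix

noncomputable section

abbrev Zm0 : Type := WithZero (Multiplicative ℤ)

/-- `ev n` is the value (in `ℤₘ₀ = WithZero (Multiplicative ℤ)`) of an element of additive
valuation `n`; thus `x ∈ 𝔭^n` iff `v x ≤ ev n`, `x ∈ 𝔬` iff `v x ≤ ev 0`, and `x ∈ 𝔬^×` iff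
`v x = ev 0`. -/
def ev (n : ℤ) : Zm0 := ((Multiplicative.ofAdd (-n) : Multiplicative ℤ) : Zm0)

variable {F : Type*} [Field F]

def tmat (a b c x y : F) : Matrix (Fin 2) (Fin 2) F :=
  !![x, c * y; -(a * y), x - b * y]

def TSet (a b c : F) : Set (Matrix (Fin 2) (Fin 2) F) :=
  {m | ∃ x y : F, x ^ 2 - b * x * y + a * c * y ^ 2 ≠ 0 ∧ m = tmat a b c x y}

def wmat (F : Type*) [Field F] : Matrix (Fin 2) (Fin 2) F := !![0, 1; -1, 0]

def GL2O (v : Valuation F Zm0) : Set (Matrix (Fin 2) (Fin 2) F) :=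
  {g | (∀ i j, v (g i j) ≤ ev 0) ∧ v g.det = ev 0}

def Iwahori (v : Valuation F Zm0) : Set (Matrix (Fin 2) (Fin 2) F) :=
  {g | g ∈ GL2O v ∧ v (g 1 0) ≤ ev 1}

/-! Write `P = ϖ ^ r` and `Q = aP² + bPu + cu²`. If
`t(x, y) · [[0, P], [-1, 0]] · k = [[P, 0], [u, 1]]` with `k` in the Iwahori subgroup, comparing
determinants makes `N = det t(x, y)` a unit, and multiplying by the adjugate of `t(x, y)` gives
`y = P y₀` and `x ≡ (bP + cu) y₀ mod 𝔭` with `y₀` integral. Then `N ≡ c Q y₀² mod 𝔭`, so `Q` is a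
unit. Conversely, if `Q` is a unit then `t(bP + cu, P)` has determinant `cQ` and
`t(bP + cu, P) · [[0, P], [-1, 0]] = [[P, 0], [u, 1]] · [[-c, bP + cu], [0, -Q]]`,
the last factor being an upper triangular element of the Iwahori subgroup. -/

open DoubleCoset

section DoubleCosets

variable {M : Type*} [Monoid M] {S K : Submonoid M} {g g' : M}

lemma self_mem_doubleCoset (g : M) (S K : Submonoid M) : g ∈ doubleCoset g S K :=
  mem_doubleCoset.2 ⟨1, S.one_mem, 1, K.one_mem, by simp⟩

lemma doubleCoset_subset_of_mem (h : g' ∈ doubleCoset g S K) :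
    doubleCoset g' S K ⊆ doubleCoset g S K := by
  obtain ⟨s, hs, k, hk, rfl⟩ := mem_doubleCoset.1 h
  intro z hz
  obtain ⟨s', hs', k', hk', rfl⟩ := mem_doubleCoset.1 hz
  exact mem_doubleCoset.2 ⟨s' * s, S.mul_mem hs' hs, k * k', K.mul_mem hk hk', by
    simp only [mul_assoc]⟩

lemma doubleCoset_eq_iff_mem_and_mem :
    doubleCoset g S K = doubleCoset g' S K ↔ g' ∈ doubleCoset g S K ∧ g ∈ doubleCoset g' S K :=
  ⟨fun h => ⟨h ▸ self_mem_doubleCoset g' S K, h ▸ self_mem_doubleCoset g S K⟩,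
    fun ⟨hg', hg⟩ => (doubleCoset_subset_of_mem hg).antisymm (doubleCoset_subset_of_mem hg')⟩

lemma doubleCoset_eq_of_mul_eq_mul {s s' k k' : M} (hs : s ∈ S) (hs' : s' ∈ S) (hk : k ∈ K)
    (hk' : k' ∈ K) (hs's : s' * s = 1) (hkk' : k * k' = 1) (h : s * g = g' * k) :
    doubleCoset g S K = doubleCoset g' S K := by
  refine doubleCoset_eq_iff_mem_and_mem.2 ⟨mem_doubleCoset.2 ⟨s, hs, k', hk', ?_⟩,
    mem_doubleCoset.2 ⟨s', hs', k, hk, ?_⟩⟩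
  · rw [h, mul_assoc, hkk', mul_one]
  · rw [mul_assoc, ← h, ← mul_assoc, hs's, one_mul]

end DoubleCosets

lemma le_ev_one_iff_lt_one {x : Zm0} : x ≤ ev 1 ↔ x < 1 := by
  have h : ev 1 * WithZero.exp 1 = 1 := by simp [ev, WithZero.exp]
  rw [← WithZero.lt_mul_exp_iff_le (y := ev 1) WithZero.coe_ne_zero, h]

section Torus

variable (a b c : F)

lemma det_tmat (x y : F) : (tmat a b c x y).det = x ^ 2 - b * x * y + a * c * y ^ 2 := by
  simp only [tmat, det_fin_two_of]; ring

lemma tmat_mul_tmat (x y x' y' : F) :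
    tmat a b c x y * tmat a b c x' y'
      = tmat a b c (x * x' - a * c * (y * y')) (x * y' + x' * y - b * (y * y')) := by
  ext i j; fin_cases i <;> fin_cases j <;> simp [tmat] <;> ring

lemma tmat_one_zero : tmat a b c 1 0 = 1 := by
  ext i j; fin_cases i <;> fin_cases j <;> simp [tmat]

def torusSubmonoid : Submonoid (Matrix (Fin 2) (Fin 2) F) where
  carrier := TSet a b c
  one_mem' := ⟨1, 0, by simp, (tmat_one_zero a b c).symm⟩
  mul_mem' := by
    rintro _ _ ⟨x, y, hN, rfl⟩ ⟨x', y', hN', rfl⟩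
    refine ⟨_, _, ?_, tmat_mul_tmat a b c x y x' y'⟩
    rw [← det_tmat, ← tmat_mul_tmat, det_mul, det_tmat, det_tmat]
    exact mul_ne_zero hN hN'

lemma exists_mul_eq_one_of_mem_TSet {t : Matrix (Fin 2) (Fin 2) F} (ht : t ∈ TSet a b c) :
    ∃ t' ∈ TSet a b c, t' * t = 1 := by
  obtain ⟨x, y, hN, rfl⟩ := ht
  set N := x ^ 2 - b * x * y + a * c * y ^ 2
  have hinv : tmat a b c ((x - b * y) / N) (-y / N) * tmat a b c x y = 1 := by
    rw [tmat_mul_tmat, ← tmat_one_zero a b c]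
    congr 1 <;> field_simp <;> ring
  refine ⟨_, ⟨_, _, ?_, rfl⟩, hinv⟩
  rw [← det_tmat]
  exact left_ne_zero_of_mul_eq_one (by rw [← det_mul, hinv, det_one])

lemma det_tmat_eq_mul_add (P u x y₀ : F) :
    (tmat a b c x (P * y₀)).det
      = (x - (b * P + c * u) * y₀) * (x + c * u * y₀)
        + c * (a * P ^ 2 + b * P * u + c * u ^ 2) * y₀ ^ 2 := by
  rw [det_tmat]; ring

end Torus

section Iwahori

variable (v : Valuation F Zm0)

lemma mem_Iwahori_iff {g : Matrix (Fin 2) (Fin 2) F} :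
    g ∈ Iwahori v ↔ (∀ i j, v (g i j) ≤ 1) ∧ v g.det = 1 ∧ v (g 1 0) < 1 := by
  simp only [Iwahori, GL2O, Set.mem_ofPred_eq, le_ev_one_iff_lt_one, and_assoc]
  rfl

def iwahoriSubmonoid : Submonoid (Matrix (Fin 2) (Fin 2) F) where
  carrier := Iwahori v
  one_mem' := (mem_Iwahori_iff v).2 ⟨fun i j => by fin_cases i <;> fin_cases j <;> simp, by simp,
    by simp⟩
  mul_mem' := by
    intro g h hg hh
    obtain ⟨hg, hgdet, hg10⟩ := (mem_Iwahori_iff v).1 hg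
    obtain ⟨hh, hhdet, hh10⟩ := (mem_Iwahori_iff v).1 hh
    refine (mem_Iwahori_iff v).2
      ⟨fun i j => ?_, by rw [det_mul, map_mul, hgdet, hhdet, one_mul], ?_⟩
    · rw [mul_apply, Fin.sum_univ_two]
      exact v.map_add_le (by rw [map_mul]; exact mul_le_one' (hg i 0) (hh 0 j))
        (by rw [map_mul]; exact mul_le_one' (hg i 1) (hh 1 j))
    · rw [mul_apply, Fin.sum_univ_two]
      exact v.map_add_lt (by rw [map_mul]; exact Left.mul_lt_one_of_lt_of_le hg10 (hh 0 0))
        (by rw [map_mul]; exact Right.mul_lt_one_of_le_of_lt (hg 1 1) hh10)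

lemma upperTriangular_mem_Iwahori {α β δ : F} (hα : v α = 1) (hβ : v β ≤ 1) (hδ : v δ = 1) :
    !![α, β; 0, δ] ∈ Iwahori v := by
  refine (mem_Iwahori_iff v).2 ⟨fun i j => ?_, by simp [hα, hδ], by simp⟩
  fin_cases i <;> fin_cases j <;> simp [hα, hβ, hδ]

lemma exists_mul_eq_one_of_mem_Iwahori {k : Matrix (Fin 2) (Fin 2) F} (hk : k ∈ Iwahori v) :
    ∃ k' ∈ Iwahori v, k * k' = 1 := by
  obtain ⟨hk, hkdet, hk10⟩ := (mem_Iwahori_iff v).1 hk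
  have hdet0 : k.det ≠ 0 := by
    intro h; rw [h, map_zero] at hkdet; exact zero_ne_one hkdet
  refine ⟨k⁻¹, (mem_Iwahori_iff v).2 ⟨fun i j => ?_, ?_, ?_⟩,
    mul_nonsing_inv k (isUnit_iff_ne_zero.2 hdet0)⟩
  · rw [inv_def, adjugate_fin_two]
    fin_cases i <;> fin_cases j <;> simp [hkdet, hk]
  · rw [det_nonsing_inv, Ring.inverse_eq_inv', map_inv₀, hkdet, inv_one]
  · rw [inv_def, adjugate_fin_two]
    simpa [hkdet] using hk10

end Iwahori

section DoubleCosetCriterion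

variable {v : Valuation F Zm0} {a b c P u : F}

lemma valuation_det_tmat_lt_one {x y₀ : F} (hc : v c = 1) (hu : v u ≤ 1) (hx : v x ≤ 1)
    (hy₀ : v y₀ ≤ 1) (hs : v (x - (b * P + c * u) * y₀) < 1)
    (hQ : v (a * P ^ 2 + b * P * u + c * u ^ 2) < 1) :
    v (tmat a b c x (P * y₀)).det < 1 := by
  rw [det_tmat_eq_mul_add]
  refine v.map_add_lt ?_ ?_ <;> simp only [map_mul, map_pow, hc, one_mul]
  · refine Left.mul_lt_one_of_lt_of_le hs (v.map_add_le hx ?_)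
    simpa [hc] using mul_le_one' hu hy₀
  · exact Left.mul_lt_one_of_lt_of_le hQ (pow_le_one' hy₀ 2)

lemma valuation_eq_one_of_mem_doubleCoset (hao : v a ≤ 1) (hbo : v b ≤ 1) (hc : v c = 1)
    (hP : v P ≤ 1) (hP0 : P ≠ 0) (hu : v u ≤ 1)
    (h : !![P, 0; u, 1] ∈ doubleCoset !![0, P; -1, 0] (TSet a b c) (Iwahori v)) :
    v (a * P ^ 2 + b * P * u + c * u ^ 2) = 1 := by
  obtain ⟨_, ⟨x, y, -, rfl⟩, k, hk, h⟩ := mem_doubleCoset.1 h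
  obtain ⟨hk, hkdet, hk10⟩ := (mem_Iwahori_iff v).1 hk
  have hc0 : c ≠ 0 := by rintro rfl; simp at hc
  set N := (tmat a b c x y).det
  have hN : v N = 1 := by
    have hdet := congrArg det h
    rw [det_mul, det_mul, det_fin_two_of, det_fin_two_of] at hdet
    have hNk : N * k.det = 1 := mul_left_cancel₀ hP0 (by linear_combination -hdet)
    simpa [hkdet] using congrArg v hNk
  have hadj : (tmat a b c x y).adjugate * !![P, 0; u, 1] = N • (!![0, P; -1, 0] * k) := by
    rw [h, ← mul_assoc, ← mul_assoc, adjugate_mul, smul_mul_assoc, smul_mul_assoc, one_mul]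
  have e00 := congrFun (congrFun hadj 0) 0
  have e01 := congrFun (congrFun hadj 0) 1
  have e11 := congrFun (congrFun hadj 1) 1
  simp only [tmat, adjugate_fin_two_of, Matrix.smul_apply, smul_eq_mul, mul_apply, Fin.sum_univ_two,
    of_apply, cons_val', cons_val_zero, cons_val_one, empty_val', cons_val_fin_one] at e00 e01 e11
  have hy : y = P * (-(N * k 1 1) / c) := by
    field_simp
    linear_combination -e01
  set y₀ := -(N * k 1 1) / c
  have hs : x - (b * P + c * u) * y₀ = N * k 1 0 := by
    apply mul_left_cancel₀ hP0
    linear_combination e00 + (b * P + c * u) * hy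
  have hy₀ : v y₀ ≤ 1 := by simpa [y₀, hc, hN] using hk 1 1
  have hx : v x ≤ 1 := by simpa [show x = -(N * k 0 1) by linear_combination e11, hN] using hk 0 1
  have hQ₁ : v (a * P ^ 2 + b * P * u + c * u ^ 2) ≤ 1 := by
    refine v.map_add_le (v.map_add_le ?_ ?_) ?_ <;> simp only [map_mul, map_pow, hc, one_mul]
    · exact mul_le_one' hao (pow_le_one' hP 2)
    · exact mul_le_one' (mul_le_one' hbo hP) hu
    · exact pow_le_one' hu 2
  refine hQ₁.eq_of_not_lt fun hQ => ?_
  have hN_lt := valuation_det_tmat_lt_one hc hu hx hy₀ (by simpa [hs, hN] using hk10) hQ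
  rw [← hy] at hN_lt
  exact hN_lt.ne hN

lemma doubleCoset_eq_of_valuation_eq_one (hbo : v b ≤ 1) (hc : v c = 1) (hP : v P ≤ 1)
    (hu : v u ≤ 1) (hQ : v (a * P ^ 2 + b * P * u + c * u ^ 2) = 1) :
    doubleCoset !![0, P; -1, 0] (TSet a b c) (Iwahori v)
      = doubleCoset !![P, 0; u, 1] (TSet a b c) (Iwahori v) := by
  set Q := a * P ^ 2 + b * P * u + c * u ^ 2
  set X := b * P + c * u
  have hX : v X ≤ 1 := v.map_add_le (by simpa using mul_le_one' hbo hP) (by simpa [hc] using hu)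
  have ht : tmat a b c X P ∈ TSet a b c := by
    refine ⟨X, P, ?_, rfl⟩
    have hdet : (tmat a b c X P).det = c * Q := by
      rw [← mul_one P, det_tmat_eq_mul_add a b c P u X 1]
      ring
    rw [← det_tmat, hdet]
    exact mul_ne_zero (by rintro rfl; simp at hc) (by rintro h; simp [h] at hQ)
  have hk : !![-c, X; 0, -Q] ∈ Iwahori v := upperTriangular_mem_Iwahori v (by simpa) hX (by simpa)
  obtain ⟨t', ht', ht't⟩ := exists_mul_eq_one_of_mem_TSet a b c ht
  obtain ⟨k', hk', hkk'⟩ := exists_mul_eq_one_of_mem_Iwahori v hk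
  refine doubleCoset_eq_of_mul_eq_mul (S := torusSubmonoid a b c) (K := iwahoriSubmonoid v)
    ht ht' hk hk' ht't hkk' ?_
  ext i j
  fin_cases i <;> fin_cases j <;> simp [tmat, X, Q] <;> ring

end DoubleCosetCriterion

theorem stmt7_general
    (v : Valuation F Zm0) (ϖ : F) (hϖ : v ϖ = ev 1)
    (a b c : F)
    (hao : v a ≤ ev 0) (hbo : v b ≤ ev 0) (hc : v c = ev 0)
    (r : ℕ) (u : F) (hu : v u ≤ ev 0) :
    TSet a b c * ({!![ϖ ^ r, 0; 0, 1] * wmat F} : Set (Matrix (Fin 2) (Fin 2) F)) * Iwahori v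
      = TSet a b c * ({!![ϖ ^ r, 0; 0, 1] * !![1, 0; u, 1]} : Set (Matrix (Fin 2) (Fin 2) F))
          * Iwahori v
    ↔ v (a * ϖ ^ (2 * r) + b * ϖ ^ r * u + c * u ^ 2) = ev 0 := by
  have hP : v (ϖ ^ r) ≤ 1 := by
    rw [map_pow, hϖ]
    exact pow_le_one' (le_ev_one_iff_lt_one.1 le_rfl).le r
  have hP0 : ϖ ^ r ≠ 0 := pow_ne_zero r fun h => by simp [h, ev] at hϖ
  have hw : !![ϖ ^ r, 0; 0, 1] * wmat F = !![0, ϖ ^ r; -1, 0] := by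
    ext i j; fin_cases i <;> fin_cases j <;> simp [wmat]
  have hn : !![ϖ ^ r, 0; 0, 1] * !![1, 0; u, 1] = !![ϖ ^ r, 0; u, 1] := by
    ext i j; fin_cases i <;> fin_cases j <;> simp
  rw [hw, hn, pow_mul', show ev 0 = 1 from rfl]
  refine ⟨fun h => ?_, doubleCoset_eq_of_valuation_eq_one hbo hc hP hu⟩
  exact valuation_eq_one_of_mem_doubleCoset hao hbo hc hP hP0 hu
    ((doubleCoset_eq_iff_mem_and_mem (S := torusSubmonoid a b c) (K := iwahoriSubmonoid v)).1 h).1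

/-- Assume d = b² − 4ac is not a square in F.  For every r ≥ 0 and u ∈ 𝔬, the
double cosets T(F)·diag(ϖ^r,1)·w·I and T(F)·diag(ϖ^r,1)·[[1,0],[u,1]]·I are equal iff
a·ϖ^{2r} + b·ϖ^r·u + c·u² ∈ 𝔬^×. -/
theorem stmt7
    (v : Valuation F Zm0) (ϖ : F) (hϖ : v ϖ = ev 1)
    (a b c : F)
    (hao : v a ≤ ev 0) (hbo : v b ≤ ev 0) (hc : v c = ev 0)
    (hd0 : b ^ 2 - 4 * (a * c) ≠ 0)
    (hnonsq : ∀ s : F, s ^ 2 ≠ b ^ 2 - 4 * (a * c))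
    (r : ℕ) (u : F) (hu : v u ≤ ev 0) :
    TSet a b c * ({!![ϖ ^ r, 0; 0, 1] * wmat F} : Set (Matrix (Fin 2) (Fin 2) F)) * Iwahori v
      = TSet a b c * ({!![ϖ ^ r, 0; 0, 1] * !![1, 0; u, 1]} : Set (Matrix (Fin 2) (Fin 2) F))
          * Iwahori v
    ↔ v (a * ϖ ^ (2 * r) + b * ϖ ^ r * u + c * u ^ 2) = ev 0 :=
  stmt7_general v ϖ hϖ a b c hao hbo hc r u hu
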